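/- The parameterized family H̃^{a,c} solves the unnormalized 2D zero-pressure Stokes system with the 2D Stokeslet as source, i.e. ∇² H̃^{a,c}_{kj}(Q,P) = Ũ_{kj}(Q,P) and ∑_{k=1}^{2} ∂H̃^{a,c}_{kj}(Q,P)/∂q_k = 0 hold for all k, j ∈ {1,2} and all Q ≠ P, if and only if a = 3/4 and c = −1/16. -/

import Mathlib

open Real

/-- Partial derivative of a scalar function on ℝ² with respect to the `l`-th coordinate. -/
noncomputable def pd2 (f : EuclideanSpace ℝ (Fin 2) → ℝ) (l : Fin 2)
    (Q : EuclideanSpace ℝ (Fin 2)) : ℝ :=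
  fderiv ℝ f Q (EuclideanSpace.single l 1)

/-- The parameterized 2D family
H̃^{a,c}_{kj}(Q,P) = δ_{kj} r² (a − (1/2) log r) + ∂²/∂q_k∂q_j [ r⁴ (c + (1/32) log r) ]. -/
noncomputable def Hac (P : EuclideanSpace ℝ (Fin 2)) (a c : ℝ) (k j : Fin 2)
    (Q : EuclideanSpace ℝ (Fin 2)) : ℝ :=
  (if k = j then (1 : ℝ) else 0) * ‖Q - P‖ ^ 2 * (a - (1 / 2) * Real.log ‖Q - P‖) +
    pd2 (fun Q' =>
      pd2 (fun Q'' => ‖Q'' - P‖ ^ 4 * (c + (1 / 32) * Real.log ‖Q'' - P‖)) j Q') k Q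

abbrev E2 := EuclideanSpace ℝ (Fin 2)

lemma hasFDerivAt_s (P Q : E2) :
    HasFDerivAt (fun Q' : E2 => ‖Q' - P‖^2)
      ((2:ℕ) • ((innerSL ℝ (Q - P)).comp (ContinuousLinearMap.id ℝ E2))) Q := by
  simpa using ((hasFDerivAt_id Q).sub_const P).norm_sq

lemma inner_single (x : E2) (l : Fin 2) : (innerSL ℝ x) (EuclideanSpace.single l (1:ℝ)) = x l := by
  simp [EuclideanSpace.inner_single_right]

lemma coord_single (j l : Fin 2) : (EuclideanSpace.single l (1:ℝ)) j = if l = j then 1 else 0 := by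
  simp [EuclideanSpace.single_apply, eq_comm]

lemma hasFDerivAt_coord (P : E2) (j : Fin 2) (Q : E2) :
    HasFDerivAt (fun Q' : E2 => (Q' - P) j) (EuclideanSpace.proj j : E2 →L[ℝ] ℝ) Q := by
  simpa using ((EuclideanSpace.proj (𝕜 := ℝ) j).hasFDerivAt (x := Q)).sub_const (P j)

lemma norm_sq_sum (x : E2) : ‖x‖^2 = x 0 ^2 + x 1 ^2 := by
  rw [EuclideanSpace.norm_eq, Real.sq_sqrt (by positivity)]
  simp [Fin.sum_univ_two, sq_abs]

lemma pd2_eq {f : E2 → ℝ} {D : E2 →L[ℝ] ℝ} {l : Fin 2} {Q : E2} (h : HasFDerivAt f D Q) :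
    pd2 f l Q = D (EuclideanSpace.single l 1) := by rw [pd2, h.fderiv]

lemma pd2_congr {f g : E2 → ℝ} {l : Fin 2} {Q P : E2} (hQ : Q ≠ P)
    (h : ∀ Q', Q' ≠ P → f Q' = g Q') : pd2 f l Q = pd2 g l Q := by
  have hev : f =ᶠ[nhds Q] g := by
    filter_upwards [IsOpen.mem_nhds isOpen_compl_singleton
      (by simpa using hQ : Q ∈ ({P}ᶜ : Set E2))] with Q' hQ'
    exact h Q' hQ'
  rw [pd2, pd2, hev.fderiv_eq]

lemma hasFDerivAt_radial (P Q : E2) {φ : ℝ → ℝ} {p : ℝ} (hφ : HasDerivAt φ p (‖Q - P‖^2)) :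
    HasFDerivAt (fun Q' : E2 => φ (‖Q' - P‖^2))
      (p • ((2:ℕ) • ((innerSL ℝ (Q - P)).comp (ContinuousLinearMap.id ℝ E2)))) Q :=
  hφ.comp_hasFDerivAt Q (hasFDerivAt_s P Q)

lemma norm_sq_ne (P Q : E2) (hQ : Q ≠ P) : ‖Q - P‖^2 ≠ 0 :=
  pow_ne_zero 2 (norm_ne_zero_iff.mpr (sub_ne_zero.mpr hQ))

lemma pd2_f (P : E2) (c : ℝ) (j : Fin 2) (Q : E2) (hQ : Q ≠ P) :
    pd2 (fun Q'' => ‖Q'' - P‖ ^ 4 * (c + (1 / 32) * Real.log ‖Q'' - P‖)) j Q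
      = (Q - P) j * (4*c*‖Q - P‖^2 + (1/16)*‖Q - P‖^2*Real.log (‖Q - P‖^2) + ‖Q - P‖^2/32) := by
  have hs0 : ‖Q - P‖^2 ≠ 0 := norm_sq_ne P Q hQ
  have hfun : (fun Q'' : E2 => ‖Q'' - P‖ ^ 4 * (c + (1 / 32) * Real.log ‖Q'' - P‖))
      = fun Q'' => (‖Q'' - P‖^2)^2 * (c + (1/64) * Real.log (‖Q'' - P‖^2)) := by
    funext x
    rw [Real.log_pow]
    push_cast
    ring
  rw [hfun]
  have hφ : HasDerivAt (fun t : ℝ => t^2 * (c + (1/64) * Real.log t))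
      (2*‖Q - P‖^2*(c + (1/64)*Real.log (‖Q - P‖^2)) + ‖Q - P‖^2/64) (‖Q - P‖^2) := by
    have := (hasDerivAt_pow 2 (‖Q - P‖^2)).mul
      (((Real.hasDerivAt_log hs0).const_mul (1/64)).const_add c)
    refine this.congr_deriv ?_
    field_simp
    ring
  rw [pd2_eq (hasFDerivAt_radial P Q hφ)]
  simp only [ContinuousLinearMap.smul_apply, ContinuousLinearMap.comp_apply,
    ContinuousLinearMap.coe_id', id, inner_single, smul_eq_mul, nsmul_eq_mul, Nat.cast_ofNat]
  ring

lemma Hac_eq (P : E2) (a c : ℝ) (k j : Fin 2) (Q : E2) (hQ : Q ≠ P) :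
    Hac P a c k j Q
      = (if k = j then (1:ℝ) else 0) *
          ((a + 4*c + 1/32) * ‖Q - P‖^2 - (3/16) * (‖Q - P‖^2 * Real.log (‖Q - P‖^2)))
        + (Q - P) k * (Q - P) j * (8*c + (1/8) * Real.log (‖Q - P‖^2) + 3/16) := by
  have hs0 : ‖Q - P‖^2 ≠ 0 := norm_sq_ne P Q hQ
  have hlog : Real.log (‖Q - P‖^2) = 2 * Real.log ‖Q - P‖ := by
    rw [Real.log_pow]; push_cast; ring
  rw [Hac, pd2_congr hQ (fun Q' hQ' => pd2_f P c j Q' hQ')]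
  have hg1 : HasDerivAt (fun t : ℝ => 4*c*t + (1/16)*t*Real.log t + t/32)
      (4*c + ((1/16)*Real.log (‖Q - P‖^2) + 1/16) + 1/32) (‖Q - P‖^2) := by
    have h1 : HasDerivAt (fun t : ℝ => t * Real.log t) (Real.log (‖Q - P‖^2) + 1) (‖Q - P‖^2) := by
      have := (hasDerivAt_id (‖Q - P‖^2)).mul (Real.hasDerivAt_log hs0)
      refine this.congr_deriv ?_
      simp [hs0]
    have := (((hasDerivAt_id (‖Q - P‖^2)).const_mul (4*c)).add (h1.const_mul (1/16))).add
      ((hasDerivAt_id (‖Q - P‖^2)).div_const 32)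
    simp only [id_eq] at this
    refine (this.congr_of_eventuallyEq (Filter.Eventually.of_forall fun t => ?_)).congr_deriv ?_
    · simp only [Pi.add_apply]; ring
    · ring
  have hval : pd2 (fun Q' : E2 => (Q' - P) j *
        (4*c*‖Q' - P‖^2 + (1/16)*‖Q' - P‖^2*Real.log (‖Q' - P‖^2) + ‖Q' - P‖^2/32)) k Q
      = (Q - P) k * (Q - P) j * (8*c + (1/8)*Real.log (‖Q - P‖^2) + 3/16)
        + (if k = j then (1:ℝ) else 0) *
          (4*c*‖Q - P‖^2 + (1/16)*‖Q - P‖^2*Real.log (‖Q - P‖^2) + ‖Q - P‖^2/32) := by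
    refine (pd2_eq ((hasFDerivAt_coord P j Q).mul (hasFDerivAt_radial P Q hg1))).trans ?_
    simp only [ContinuousLinearMap.add_apply, ContinuousLinearMap.smul_apply,
      ContinuousLinearMap.comp_apply, ContinuousLinearMap.coe_id', id, inner_single,
      PiLp.proj_apply, coord_single, smul_eq_mul, nsmul_eq_mul, Nat.cast_ofNat]
    ring
  rw [hval, hlog]
  ring

lemma pd2_H (P : E2) (a c : ℝ) (k j l : Fin 2) (Q : E2) (hQ : Q ≠ P) :
    pd2 (Hac P a c k j) l Q =
      (if k = j then (1:ℝ) else 0) *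
          (((a + 4*c + 1/32) - (3/16)*(Real.log (‖Q - P‖^2) + 1)) * (2*(Q - P) l))
        + ((if l = k then (1:ℝ) else 0) * (Q - P) j + (if l = j then (1:ℝ) else 0) * (Q - P) k) *
            (8*c + (1/8)*Real.log (‖Q - P‖^2) + 3/16)
        + ((Q - P) k * (Q - P) j * (Q - P) l) * ((1/4) * (‖Q - P‖^2)⁻¹) := by
  have hs0 : ‖Q - P‖^2 ≠ 0 := norm_sq_ne P Q hQ
  rw [pd2_congr hQ (fun Q' hQ' => Hac_eq P a c k j Q' hQ')]
  have hA1 : HasDerivAt (fun t : ℝ => (a + 4*c + 1/32) * t - (3/16) * (t * Real.log t))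
      ((a + 4*c + 1/32) - (3/16)*(Real.log (‖Q - P‖^2) + 1)) (‖Q - P‖^2) := by
    have h1 : HasDerivAt (fun t : ℝ => t * Real.log t) (Real.log (‖Q - P‖^2) + 1) (‖Q - P‖^2) := by
      have := (hasDerivAt_id (‖Q - P‖^2)).mul (Real.hasDerivAt_log hs0)
      refine this.congr_deriv ?_
      simp [hs0]
    have := ((hasDerivAt_id (‖Q - P‖^2)).const_mul (a + 4*c + 1/32)).sub (h1.const_mul (3/16))
    simp only [id_eq] at this
    refine this.congr_deriv ?_
    ring
  have hB1 : HasDerivAt (fun t : ℝ => 8*c + (1/8)*Real.log t + 3/16)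
      ((1/8) * (‖Q - P‖^2)⁻¹) (‖Q - P‖^2) := by
    have := (((Real.hasDerivAt_log hs0).const_mul (1/8)).const_add (8*c)).add_const (3/16)
    convert this using 1
  refine (pd2_eq ((((hasFDerivAt_radial P Q hA1).const_mul
    ((if k = j then (1:ℝ) else 0))).add
    (((hasFDerivAt_coord P k Q).mul (hasFDerivAt_coord P j Q)).mul
      (hasFDerivAt_radial P Q hB1))))).trans ?_
  simp only [ContinuousLinearMap.add_apply, ContinuousLinearMap.smul_apply,
    ContinuousLinearMap.comp_apply, ContinuousLinearMap.coe_id', id, inner_single,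
    PiLp.proj_apply, coord_single, smul_eq_mul, nsmul_eq_mul, Nat.cast_ofNat, Pi.mul_apply]
  ring

lemma pd2_pd2_H (P : E2) (a c : ℝ) (k j l : Fin 2) (Q : E2) (hQ : Q ≠ P) :
    pd2 (fun Q' => pd2 (Hac P a c k j) l Q') l Q =
      (if k = j then (1:ℝ) else 0) *
          (2*((a + 4*c + 1/32) - (3/16)*(Real.log (‖Q - P‖^2) + 1))
            - (3/4)*(Q - P) l^2 * (‖Q - P‖^2)⁻¹)
        + ((if l = k then (1:ℝ) else 0) * (Q - P) j + (if l = j then (1:ℝ) else 0) * (Q - P) k) *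
            ((Q - P) l * (1/4) * (‖Q - P‖^2)⁻¹)
        + (8*c + (1/8)*Real.log (‖Q - P‖^2) + 3/16) *
            (2 * (if l = k then (1:ℝ) else 0) * (if l = j then (1:ℝ) else 0))
        - (Q - P) k * (Q - P) j * (Q - P) l^2 * (1/2) * ((‖Q - P‖^2)^2)⁻¹
        + ((Q - P) k * (Q - P) j + (Q - P) k * (Q - P) l * (if l = j then (1:ℝ) else 0)
            + (Q - P) j * (Q - P) l * (if l = k then (1:ℝ) else 0)) *
            ((1/4) * (‖Q - P‖^2)⁻¹) := by
  have hs0 : ‖Q - P‖^2 ≠ 0 := norm_sq_ne P Q hQ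
  rw [pd2_congr hQ (fun Q' hQ' => pd2_H P a c k j l Q' hQ')]
  have hA1' : HasDerivAt (fun t : ℝ => (a + 4*c + 1/32) - (3/16)*(Real.log t + 1))
      (-((3/16) * (‖Q - P‖^2)⁻¹)) (‖Q - P‖^2) := by
    have := (((Real.hasDerivAt_log hs0).add_const 1).const_mul (3/16)).const_sub (a + 4*c + 1/32)
    convert this using 1
  have hB1 : HasDerivAt (fun t : ℝ => 8*c + (1/8)*Real.log t + 3/16)
      ((1/8) * (‖Q - P‖^2)⁻¹) (‖Q - P‖^2) := by
    have := (((Real.hasDerivAt_log hs0).const_mul (1/8)).const_add (8*c)).add_const (3/16)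
    convert this using 1
  have hψ : HasDerivAt (fun t : ℝ => (1/4) * t⁻¹)
      ((1/4) * (-((‖Q - P‖^2)^2)⁻¹)) (‖Q - P‖^2) :=
    (hasDerivAt_inv hs0).const_mul (1/4)
  refine (pd2_eq (((((hasFDerivAt_radial P Q hA1').mul
      ((hasFDerivAt_coord P l Q).const_mul 2)).const_mul ((if k = j then (1:ℝ) else 0))).add
    ((((hasFDerivAt_coord P j Q).const_mul ((if l = k then (1:ℝ) else 0))).add
      ((hasFDerivAt_coord P k Q).const_mul ((if l = j then (1:ℝ) else 0)))).mul
      (hasFDerivAt_radial P Q hB1))).add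
    ((((hasFDerivAt_coord P k Q).mul (hasFDerivAt_coord P j Q)).mul
      (hasFDerivAt_coord P l Q)).mul (hasFDerivAt_radial P Q hψ)))).trans ?_
  simp only [ContinuousLinearMap.add_apply, ContinuousLinearMap.smul_apply,
    ContinuousLinearMap.comp_apply, ContinuousLinearMap.coe_id', id, inner_single,
    PiLp.proj_apply, coord_single, smul_eq_mul, nsmul_eq_mul, Nat.cast_ofNat,
    eq_self_iff_true, if_true, Pi.mul_apply, Pi.add_apply]
  ring

lemma div_H (P : E2) (a c : ℝ) (j : Fin 2) (Q : E2) (hQ : Q ≠ P) :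
    ∑ k : Fin 2, pd2 (Hac P a c k j) k Q = (Q - P) j * (2*a + 32*c + 1/2) := by
  have hs0 : ‖Q - P‖^2 ≠ 0 := norm_sq_ne P Q hQ
  have hs : ‖Q - P‖^2 = (Q - P) 0 ^2 + (Q - P) 1 ^2 := norm_sq_sum (Q - P)
  have hR : (Q - P) 0 ^2 + (Q - P) 1 ^2 ≠ 0 := hs ▸ hs0
  have hlog : Real.log (‖Q - P‖^2) = 2 * Real.log ‖Q - P‖ := by
    rw [Real.log_pow]; push_cast; ring
  rw [Fin.sum_univ_two, pd2_H P a c 0 j 0 Q hQ, pd2_H P a c 1 j 1 Q hQ, hlog, hs]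
  set R : E2 := Q - P with hRdef
  fin_cases j <;> simp only [Fin.zero_eta, Fin.mk_one, Fin.isValue] <;> norm_num <;> field_simp [hR] <;> ring

set_option maxHeartbeats 1600000 in
lemma lap_H (P : E2) (a c : ℝ) (k j : Fin 2) (Q : E2) (hQ : Q ≠ P) :
    ∑ l : Fin 2, pd2 (fun Q' => pd2 (Hac P a c k j) l Q') l Q =
      (if k = j then (1:ℝ) else 0) * ((4*a + 32*c - 1) - Real.log ‖Q - P‖)
        + (Q - P) k * (Q - P) j / ‖Q - P‖^2 := by
  have hs0 : ‖Q - P‖^2 ≠ 0 := norm_sq_ne P Q hQ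
  have hs : ‖Q - P‖^2 = (Q - P) 0 ^2 + (Q - P) 1 ^2 := norm_sq_sum (Q - P)
  have hR : (Q - P) 0 ^2 + (Q - P) 1 ^2 ≠ 0 := hs ▸ hs0
  have hlog : Real.log (‖Q - P‖^2) = 2 * Real.log ‖Q - P‖ := by
    rw [Real.log_pow]; push_cast; ring
  rw [Fin.sum_univ_two, pd2_pd2_H P a c k j 0 Q hQ, pd2_pd2_H P a c k j 1 Q hQ, hlog, hs]
  set R : E2 := Q - P with hRdef
  fin_cases k <;> fin_cases j <;> simp only [Fin.zero_eta, Fin.mk_one, Fin.isValue] <;> norm_num <;> field_simp [hR] <;> ring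

/-- H̃^{a,c} solves the unnormalized 2D zero-pressure Stokes system with the 2D Stokeslet
as source, i.e. ∇² H̃^{a,c}_{kj} = Ũ_{kj} and ∑_k ∂H̃^{a,c}_{kj}/∂q_k = 0 for all k, j and
all Q ≠ P, if and only if a = 3/4 and c = −1/16. -/
theorem twoD_parameterized_characterization
    (P : EuclideanSpace ℝ (Fin 2)) (a c : ℝ) :
    ((∀ k j : Fin 2, ∀ Q : EuclideanSpace ℝ (Fin 2), Q ≠ P →
        (∑ l : Fin 2, pd2 (fun Q' => pd2 (Hac P a c k j) l Q') l Q) =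
          -(if k = j then (1 : ℝ) else 0) * Real.log ‖Q - P‖ +
            (Q - P) k * (Q - P) j / ‖Q - P‖ ^ 2) ∧
      (∀ j : Fin 2, ∀ Q : EuclideanSpace ℝ (Fin 2), Q ≠ P →
        (∑ k : Fin 2, pd2 (Hac P a c k j) k Q) = 0)) ↔
      a = 3 / 4 ∧ c = -(1 / 16) := by
  constructor
  · rintro ⟨h1, h2⟩
    set Q0 : E2 := P + EuclideanSpace.single 0 1 with hQ0def
    have hRQ : Q0 - P = EuclideanSpace.single 0 (1:ℝ) := add_sub_cancel_left P _
    have hne : Q0 ≠ P := by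
      intro h
      have h0 : Q0 - P = 0 := by rw [h, sub_self]
      rw [hRQ] at h0
      have := congrArg (· 0) h0
      simp [EuclideanSpace.single_apply] at this
    have hnorm : ‖Q0 - P‖ = 1 := by rw [hRQ]; simp
    have e0 : (Q0 - P) 0 = 1 := by rw [hRQ]; simp [EuclideanSpace.single_apply]
    have hlap := h1 0 0 Q0 hne
    rw [lap_H P a c 0 0 Q0 hne] at hlap
    have hdiv := h2 0 Q0 hne
    rw [div_H P a c 0 Q0 hne] at hdiv
    rw [hnorm, e0] at hlap
    rw [e0] at hdiv
    simp [Real.log_one] at hlap hdiv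
    constructor <;> linarith
  · rintro ⟨ha, hc⟩
    subst ha; subst hc
    constructor
    · intro k j Q hQ
      rw [lap_H P _ _ k j Q hQ]
      norm_num
    · intro j Q hQ
      rw [div_H P _ _ j Q hQ]
      norm_num
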